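/- arXiv:1602.08705 — 2 statements merged into one kernel-verified Lean document; each statement's English description precedes it below -/
import Mathlib

section
/- Let H_W be the quasi-shuffle Hopf algebra of words over ℂ with letters a_r (r = 1,...,R), let σ be an infinitesimal character with σ(a_i) = c_i and φ = exp_⋆(Lσ) : H_W → ℂ[L]. Let w = a_{i_1} ⧢_Θ a_{i_2} ⧢_Θ ··· ⧢_Θ a_{i_n} be the quasi-shuffle product of n letters and B_+^{a_r} the operator prepending the letter a_r to each word. Then the coefficient of L^{n+1} in φ(B_+^{a_r}(w)) equals 1/(n+1) times the coefficient of L^{n+1} in φ(a_r ⧢_Θ a_{i_1} ⧢_Θ ··· ⧢_Θ a_{i_n}); explicitly, [L^{n+1}] φ(B_+^{a_r}(w)) = c_r c_{i_1} ··· c_{i_n} / (n+1). -/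
open scoped TensorProduct
noncomputable section

variable {Ω : Type*}

/-- The free `ℂ`-vector space on words over the alphabet `Ω`. -/
abbrev HW (Ω : Type*) := List Ω →₀ ℂ

/-- Quasi-shuffle product of two words. -/
def qshW (Θ : Ω → Ω → Ω) : List Ω → List Ω → HW Ω
  | [], v => Finsupp.single v 1
  | u, [] => Finsupp.single u 1
  | a :: u, b :: v =>
      Finsupp.mapDomain (a :: ·) (qshW Θ u (b :: v)) +
      Finsupp.mapDomain (b :: ·) (qshW Θ (a :: u) v) +
      Finsupp.mapDomain (Θ a b :: ·) (qshW Θ u v)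
  termination_by u v => u.length + v.length

/-- Bilinear extension of the quasi-shuffle product. -/
def qshL (Θ : Ω → Ω → Ω) : HW Ω →ₗ[ℂ] HW Ω →ₗ[ℂ] HW Ω :=
  Finsupp.lift (HW Ω →ₗ[ℂ] HW Ω) ℂ (List Ω) fun u =>
    Finsupp.lift (HW Ω) ℂ (List Ω) fun v => qshW Θ u v

/-- Deconcatenation coproduct `Δ(w) = Σ_{uv = w} v ⊗ u`. -/
def deconcat : HW Ω →ₗ[ℂ] HW Ω ⊗[ℂ] HW Ω :=
  Finsupp.lift (HW Ω ⊗[ℂ] HW Ω) ℂ (List Ω) fun w =>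
    ∑ i ∈ Finset.range (w.length + 1),
      Finsupp.single (w.drop i) (1 : ℂ) ⊗ₜ[ℂ] Finsupp.single (w.take i) (1 : ℂ)

/-- The counit `δ_∅`: indicator of the empty word. -/
def counitW : HW Ω →ₗ[ℂ] ℂ :=
  Finsupp.lift ℂ ℂ (List Ω) fun w => match w with | [] => 1 | _ => 0

/-- The convolution product on `Hom(H_W, ℂ)`. -/
def convC (f g : HW Ω →ₗ[ℂ] ℂ) : HW Ω →ₗ[ℂ] ℂ :=
  LinearMap.mul' ℂ ℂ ∘ₗ TensorProduct.map f g ∘ₗ deconcat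

/-- Convolution powers `σ^{⋆k}` with `σ^{⋆0} = 1ε`;  the Feynman rules
`φ = exp_⋆(Lσ)` have `[L^k] φ = σ^{⋆k}/k!`. -/
def convCPow (σ : HW Ω →ₗ[ℂ] ℂ) : ℕ → (HW Ω →ₗ[ℂ] ℂ)
  | 0 => counitW
  | n + 1 => convC σ (convCPow σ n)

/-- The iterated quasi-shuffle product `a_{i_1} ⧢_Θ ⋯ ⧢_Θ a_{i_n}`. -/
def qprod (Θ : Ω → Ω → Ω) (l : List Ω) : HW Ω :=
  (l.map fun a => (Finsupp.single [a] 1 : HW Ω)).foldr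
    (fun x acc => qshL Θ x acc) (Finsupp.single [] 1)

/-- `B_+^a`: the linear map prepending the letter `a` to each word. -/
def Bplus (a : Ω) : HW Ω →ₗ[ℂ] HW Ω :=
  Finsupp.lmapDomain ℂ ℂ (a :: ·)

section Aux

/-! The top-degree part of `σ^{⋆k}` only sees the deconcatenations of a word into single
letters, because `σ(∅) = 0`: on words of length at most `k` it is the functional `lengthWeight c k`
sending a word of length exactly `k` to the product of the `c`-values of its letters and every
shorter word to `0`. This functional turns `B_+^a` into multiplication by `c a`, and on a
quasi-shuffle `u ⧢_Θ v` of total length `k` only the shuffles survive (every contraction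
`Θ(a, b)` shortens the word), contributing the binomial coefficient `(k choose |u|)`. Hence
`w = a_{i_1} ⧢_Θ ⋯ ⧢_Θ a_{i_n}` has weight `n! · c_{i_1} ⋯ c_{i_n}`, so `B_+^{a_r}(w)` has weight
`n! · c_r c_{i_1} ⋯ c_{i_n}` while `a_r ⧢_Θ w` has weight `(n + 1)! · c_r c_{i_1} ⋯ c_{i_n}`. -/

theorem LinearMap.eqOn_supported_of_single {α R M : Type*} [Semiring R] [AddCommMonoid M]
    [Module R M] {f g : (α →₀ R) →ₗ[R] M} {s : Set α}
    (h : ∀ a ∈ s, f (Finsupp.single a 1) = g (Finsupp.single a 1)) :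
    Set.EqOn f g (Finsupp.supported R R s) := by
  rw [Finsupp.supported_eq_span_single]
  refine LinearMap.eqOn_span' ?_
  rintro _ ⟨a, ha, rfl⟩
  exact h a ha

abbrev lengthLE (n : ℕ) : Submodule ℂ (HW Ω) :=
  Finsupp.supported ℂ ℂ {w | w.length ≤ n}

theorem lengthLE_mono {m n : ℕ} (h : m ≤ n) : (lengthLE m : Submodule ℂ (HW Ω)) ≤ lengthLE n :=
  Finsupp.supported_mono fun _ hw => le_trans hw h

theorem single_mem_lengthLE {u : List Ω} {n : ℕ} (hu : u.length ≤ n) (b : ℂ) :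
    Finsupp.single u b ∈ lengthLE n :=
  Finsupp.single_mem_supported ℂ b hu

theorem Bplus_mem_lengthLE (a : Ω) {n : ℕ} {x : HW Ω} (hx : x ∈ lengthLE n) :
    Bplus a x ∈ lengthLE (n + 1) := by
  refine Finsupp.supported_comap_lmapDomain ℂ ℂ (a :: ·) {w | w.length ≤ n + 1}
    (Finsupp.supported_mono ?_ hx)
  intro w hw
  simpa using hw

section QuasiShuffle

variable (Θ : Ω → Ω → Ω)

theorem qshW_nil_left (v : List Ω) : qshW Θ [] v = Finsupp.single v 1 := by
  cases v <;> rw [qshW]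

theorem qshW_nil_right (u : List Ω) : qshW Θ u [] = Finsupp.single u 1 := by
  cases u <;> rw [qshW]; simp

theorem qshW_cons_cons (a b : Ω) (u v : List Ω) :
    qshW Θ (a :: u) (b :: v) =
      Bplus a (qshW Θ u (b :: v)) + Bplus b (qshW Θ (a :: u) v) +
        Bplus (Θ a b) (qshW Θ u v) := by
  rw [qshW]; rfl

theorem qshL_single_single (u v : List Ω) :
    qshL Θ (Finsupp.single u 1) (Finsupp.single v 1) = qshW Θ u v := by
  simp [qshL]

theorem qprod_cons (a : Ω) (l : List Ω) :
    qprod Θ (a :: l) = qshL Θ (Finsupp.single [a] 1) (qprod Θ l) := rfl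

theorem qshW_mem_lengthLE (u v : List Ω) : qshW Θ u v ∈ lengthLE (u.length + v.length) := by
  induction u, v using qshW.induct with
  | case1 v => simpa [qshW_nil_left] using single_mem_lengthLE le_rfl 1
  | case2 u => simpa [qshW_nil_right] using single_mem_lengthLE le_rfl 1
  | case3 a u b v ih₁ ih₂ ih₃ =>
    rw [qshW_cons_cons]
    refine add_mem (add_mem ?_ ?_) ?_ <;> refine lengthLE_mono ?_ (Bplus_mem_lengthLE _ ‹_›) <;>
      simp only [List.length_cons] <;> omega

theorem qshL_letter_mem_lengthLE (a : Ω) {n : ℕ} {y : HW Ω} (hy : y ∈ lengthLE n) :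
    qshL Θ (Finsupp.single [a] 1) y ∈ lengthLE (n + 1) := by
  suffices lengthLE n ≤ (lengthLE (n + 1)).comap (qshL Θ (Finsupp.single [a] 1)) from this hy
  rw [lengthLE, Finsupp.supported_eq_span_single, Submodule.span_le]
  rintro _ ⟨v, hv, rfl⟩
  have hv : v.length ≤ n := hv
  simpa [qshL_single_single] using
    lengthLE_mono (by simp; omega) (qshW_mem_lengthLE Θ [a] v)

theorem qprod_mem_lengthLE (l : List Ω) : qprod Θ l ∈ lengthLE l.length := by
  induction l with
  | nil => exact single_mem_lengthLE le_rfl 1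
  | cons a l ih => exact qshL_letter_mem_lengthLE Θ a ih

end QuasiShuffle

section LengthWeight

variable (c : Ω → ℂ)

def lengthWeight (k : ℕ) : HW Ω →ₗ[ℂ] ℂ :=
  Finsupp.lift ℂ ℂ (List Ω) fun u => if u.length = k then (u.map c).prod else 0

theorem lengthWeight_single (k : ℕ) (u : List Ω) (b : ℂ) :
    lengthWeight c k (Finsupp.single u b) = b * if u.length = k then (u.map c).prod else 0 := by
  simp [lengthWeight]

theorem lengthWeight_Bplus (a : Ω) (k : ℕ) (x : HW Ω) :
    lengthWeight c (k + 1) (Bplus a x) = c a * lengthWeight c k x := by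
  induction x using Finsupp.induction_linear with
  | zero => simp
  | add x y hx hy => rw [map_add, map_add, hx, hy, map_add, mul_add]
  | single u b =>
    rw [Bplus, Finsupp.lmapDomain_apply, Finsupp.mapDomain_single, lengthWeight_single,
      lengthWeight_single]
    simp only [List.length_cons, add_left_inj, List.map_cons, List.prod_cons]
    split_ifs <;> ring

theorem lengthWeight_eq_zero_of_mem_lengthLE {n k : ℕ} (hk : n < k) {x : HW Ω}
    (hx : x ∈ lengthLE n) : lengthWeight c k x = 0 :=
  LinearMap.eqOn_supported_of_single (g := 0) (s := {u | u.length ≤ n})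
    (fun u (hu : u.length ≤ n) => by rw [lengthWeight_single, if_neg (by omega)]; simp) hx

theorem lengthWeight_qshW (Θ : Ω → Ω → Ω) (u v : List Ω) :
    lengthWeight c (u.length + v.length) (qshW Θ u v) =
      ((u.length + v.length).choose u.length : ℂ) * (u.map c).prod * (v.map c).prod := by
  induction u, v using qshW.induct with
  | case1 v => simp [qshW_nil_left, lengthWeight_single]
  | case2 u => simp [qshW_nil_right, lengthWeight_single]
  | case3 a u b v ih₁ ih₂ ih₃ =>
    have hk : (a :: u).length + (b :: v).length = u.length + v.length + 1 + 1 := by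
      simp only [List.length_cons]; omega
    have h₁ : lengthWeight c (u.length + v.length + 1 + 1) (Bplus a (qshW Θ u (b :: v))) =
        c a * lengthWeight c (u.length + (b :: v).length) (qshW Θ u (b :: v)) := by
      rw [← lengthWeight_Bplus]; congr 2
    have h₂ : lengthWeight c (u.length + v.length + 1 + 1) (Bplus b (qshW Θ (a :: u) v)) =
        c b * lengthWeight c ((a :: u).length + v.length) (qshW Θ (a :: u) v) := by
      rw [← lengthWeight_Bplus]; congr 2; simp only [List.length_cons]; omega
    have h₃ : lengthWeight c (u.length + v.length + 1) (qshW Θ u v) = 0 :=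
      lengthWeight_eq_zero_of_mem_lengthLE c (Nat.lt_succ_self _) (qshW_mem_lengthLE Θ u v)
    rw [hk, qshW_cons_cons, map_add, map_add, h₁, h₂, lengthWeight_Bplus, h₃, ih₁, ih₂]
    simp only [List.length_cons, List.map_cons, List.prod_cons]
    rw [Nat.choose_succ_succ' (u.length + v.length + 1),
      show u.length + (v.length + 1) = u.length + v.length + 1 by omega,
      show u.length + 1 + v.length = u.length + v.length + 1 by omega]
    push_cast
    ring

theorem lengthWeight_qshL_letter (Θ : Ω → Ω → Ω) (a : Ω) {n : ℕ} {y : HW Ω}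
    (hy : y ∈ lengthLE n) :
    lengthWeight c (n + 1) (qshL Θ (Finsupp.single [a] 1) y) =
      ((n : ℂ) + 1) * c a * lengthWeight c n y := by
  refine LinearMap.eqOn_supported_of_single
    (f := lengthWeight c (n + 1) ∘ₗ qshL Θ (Finsupp.single [a] 1))
    (g := (((n : ℂ) + 1) * c a) • lengthWeight c n) (fun v (hv : v.length ≤ n) => ?_) hy
  simp only [LinearMap.comp_apply, LinearMap.smul_apply, smul_eq_mul, qshL_single_single,
    lengthWeight_single, one_mul]
  rcases hv.eq_or_lt with rfl | hv
  · have := lengthWeight_qshW c Θ [a] v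
    simp only [List.length_singleton, List.map_cons, List.map_nil, List.prod_cons,
      List.prod_nil, mul_one, add_comm 1, Nat.choose_one_right] at this
    rw [this, if_pos rfl]
    push_cast
    ring
  · rw [lengthWeight_eq_zero_of_mem_lengthLE c (by simp; omega) (qshW_mem_lengthLE Θ [a] v),
      if_neg hv.ne]
    ring

theorem lengthWeight_qprod (Θ : Ω → Ω → Ω) (l : List Ω) :
    lengthWeight c l.length (qprod Θ l) = (l.length.factorial : ℂ) * (l.map c).prod := by
  induction l with
  | nil => simp [qprod, lengthWeight_single]
  | cons a l ih =>
    rw [qprod_cons, List.length_cons,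
      lengthWeight_qshL_letter c Θ a (qprod_mem_lengthLE Θ l), ih, Nat.factorial_succ]
    simp only [List.map_cons, List.prod_cons]
    push_cast
    ring

end LengthWeight

theorem counitW_single_nil (b : ℂ) : counitW (Finsupp.single ([] : List Ω) b) = b := by
  simp [counitW]

theorem convC_single (f g : HW Ω →ₗ[ℂ] ℂ) (u : List Ω) :
    convC f g (Finsupp.single u 1) =
      ∑ i ∈ Finset.range (u.length + 1),
        f (Finsupp.single (u.drop i) 1) * g (Finsupp.single (u.take i) 1) := by
  simp [convC, deconcat, map_sum]

section ConvPow

variable {σ : HW Ω →ₗ[ℂ] ℂ} (hempty : σ (Finsupp.single ([] : List Ω) 1) = 0)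
include hempty

theorem convCPow_single_of_length_lt {k : ℕ} {u : List Ω} (hu : u.length < k) :
    convCPow σ k (Finsupp.single u 1) = 0 := by
  induction k generalizing u with
  | zero => omega
  | succ k ih =>
    rw [convCPow, convC_single, Finset.sum_range_succ, List.drop_length, hempty, zero_mul,
      add_zero]
    refine Finset.sum_eq_zero fun i hi => ?_
    have hi : i < u.length := Finset.mem_range.mp hi
    rw [ih (by rw [List.length_take]; omega), mul_zero]

theorem convCPow_single_of_length_eq (c : Ω → ℂ)
    (hletter : ∀ a : Ω, σ (Finsupp.single [a] 1) = c a) {k : ℕ} {u : List Ω}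
    (hu : u.length = k) : convCPow σ k (Finsupp.single u 1) = (u.map c).prod := by
  induction k generalizing u with
  | zero => simp [List.length_eq_zero_iff.mp hu, convCPow, counitW_single_nil]
  | succ k ih =>
    obtain ⟨v, z, rfl⟩ := (List.eq_nil_or_concat' u).resolve_left (by rintro rfl; simp at hu)
    have hv : v.length = k := by simpa using hu
    rw [convCPow, convC_single, hu, Finset.sum_range_succ, Finset.sum_range_succ,
      Finset.sum_eq_zero fun i hi => ?_]
    · rw [← hu, List.drop_length, hempty, List.drop_left' hv, List.take_left' hv, hletter,
        ih hv]
      simp [mul_comm]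
    · have hi : i < k := Finset.mem_range.mp hi
      rw [convCPow_single_of_length_lt hempty (by simp; omega), mul_zero]

theorem convCPow_eqOn_lengthLE (c : Ω → ℂ) (hletter : ∀ a : Ω, σ (Finsupp.single [a] 1) = c a)
    (k : ℕ) : Set.EqOn (convCPow σ k) (lengthWeight c k) (lengthLE (Ω := Ω) k) := by
  refine LinearMap.eqOn_supported_of_single fun u (hu : u.length ≤ k) => ?_
  rw [lengthWeight_single, one_mul]
  split_ifs with h
  · exact convCPow_single_of_length_eq hempty c hletter h
  · exact convCPow_single_of_length_lt hempty (lt_of_le_of_ne hu h)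

end ConvPow

theorem Bplus_leading_log_coefficient_general
    (Ω : Type*) (Θ : Ω → Ω → Ω)
    (σ : HW Ω →ₗ[ℂ] ℂ) (c : Ω → ℂ)
    (hempty : σ (Finsupp.single ([] : List Ω) 1) = 0)
    (hletter : ∀ a : Ω, σ (Finsupp.single [a] 1) = c a)
    (ar : Ω) (l : List Ω) :
    -- `[L^{n+1}] φ(B_+^{a_r}(w)) = (1/(n+1)) · [L^{n+1}] φ(a_r ⧢_Θ w)` …
    ((l.length + 1).factorial : ℂ)⁻¹ *
        convCPow σ (l.length + 1) (Bplus ar (qprod Θ l)) =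
      ((l.length : ℂ) + 1)⁻¹ *
        (((l.length + 1).factorial : ℂ)⁻¹ *
          convCPow σ (l.length + 1) (qshL Θ (Finsupp.single [ar] 1) (qprod Θ l))) ∧
    -- … and explicitly it equals `c_r · c_{i_1} ⋯ c_{i_n} / (n + 1)`
    ((l.length + 1).factorial : ℂ)⁻¹ *
        convCPow σ (l.length + 1) (Bplus ar (qprod Θ l)) =
      (c ar * (l.map c).prod) / ((l.length : ℂ) + 1) := by
  have hB : convCPow σ (l.length + 1) (Bplus ar (qprod Θ l)) =
      c ar * ((l.length.factorial : ℂ) * (l.map c).prod) := by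
    rw [convCPow_eqOn_lengthLE hempty c hletter _
        (Bplus_mem_lengthLE ar (qprod_mem_lengthLE Θ l)), lengthWeight_Bplus, lengthWeight_qprod]
  have hshuffle : convCPow σ (l.length + 1) (qshL Θ (Finsupp.single [ar] 1) (qprod Θ l)) =
      ((l.length + 1).factorial : ℂ) * (c ar * (l.map c).prod) := by
    rw [← qprod_cons, ← List.length_cons (a := ar) (as := l),
      convCPow_eqOn_lengthLE hempty c hletter _ (qprod_mem_lengthLE Θ (ar :: l)),
      lengthWeight_qprod, List.map_cons, List.prod_cons]
  have hn : ((l.length : ℂ) + 1) ≠ 0 := Nat.cast_add_one_ne_zero l.length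
  have hfac : (l.length.factorial : ℂ) ≠ 0 := Nat.cast_ne_zero.mpr l.length.factorial_ne_zero
  rw [hB, hshuffle, Nat.factorial_succ]
  push_cast
  constructor <;> field_simp

/-- **Proposition 11: the coefficient of `L^{n+1}` of `φ ∘ B_+`.**
Let `w = a_{i_1} ⧢_Θ ⋯ ⧢_Θ a_{i_n}` be the quasi-shuffle product of `n`
letters, `B_+^{a_r}` the operator prepending `a_r`, `σ` an infinitesimal
character with `σ(a) = c_a` on letters and `σ(∅) = 0`, and
`φ = exp_⋆(Lσ)` (so that `[L^k] φ = σ^{⋆k}/k!`).  Then the coefficient of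
`L^{n+1}` in `φ(B_+^{a_r}(w))` equals `1/(n+1)` times the coefficient of
`L^{n+1}` in `φ(a_r ⧢_Θ a_{i_1} ⧢_Θ ⋯ ⧢_Θ a_{i_n})`; explicitly it equals
`c_r·c_{i_1}⋯c_{i_n}/(n+1)`. -/
theorem Bplus_leading_log_coefficient
    (Ω : Type*) (Θ : Ω → Ω → Ω)
    (hcomm : ∀ a b : Ω, Θ a b = Θ b a)
    (hassoc : ∀ a b c : Ω, Θ (Θ a b) c = Θ a (Θ b c))
    (σ : HW Ω →ₗ[ℂ] ℂ) (c : Ω → ℂ)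
    (hinf : ∀ x y : HW Ω,
      σ (qshL Θ x y) = σ x * counitW y + counitW x * σ y)
    (hempty : σ (Finsupp.single ([] : List Ω) 1) = 0)
    (hletter : ∀ a : Ω, σ (Finsupp.single [a] 1) = c a)
    (ar : Ω) (l : List Ω) :
    -- `[L^{n+1}] φ(B_+^{a_r}(w)) = (1/(n+1)) · [L^{n+1}] φ(a_r ⧢_Θ w)` …
    ((l.length + 1).factorial : ℂ)⁻¹ *
        convCPow σ (l.length + 1) (Bplus ar (qprod Θ l)) =
      ((l.length : ℂ) + 1)⁻¹ *
        (((l.length + 1).factorial : ℂ)⁻¹ *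
          convCPow σ (l.length + 1) (qshL Θ (Finsupp.single [ar] 1) (qprod Θ l))) ∧
    -- … and explicitly it equals `c_r · c_{i_1} ⋯ c_{i_n} / (n + 1)`
    ((l.length + 1).factorial : ℂ)⁻¹ *
        convCPow σ (l.length + 1) (Bplus ar (qprod Θ l)) =
      (c ar * (l.map c).prod) / ((l.length : ℂ) + 1) :=
  Bplus_leading_log_coefficient_general Ω Θ σ c hempty hletter ar l
end Aux
end
end

section
/- Let R ≥ 1, let η_1,...,η_R be nonzero integers and c_1,...,c_R nonzero real numbers, and set A = Σ_{r'=1}^R η_{r'} c_{r'}; assume A ≠ 0. Define G_r(x) = (1 − Ax)^{c_r/A} for x ∈ ℝ with 1 − Ax > 0. Then for every r and every x with 1 − Ax > 0 we have G_r(0) = 1 and G_r'(x)·(1 − Ax) = −c_r·G_r(x), and Π_{r'=1}^R G_{r'}(x)^{η_{r'}} = 1 − Ax; i.e. G_r'(x) = −c_r G_r(x)/(1 − Ax) and Π_{r'} G_{r'}(x)^{η_{r'}} = 1 − Ax. -/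
/-- **The closed form of the leading-log expansion.**  Let `R ≥ 1`, let
`η_1, …, η_R` be nonzero integers and `c_1, …, c_R` nonzero real numbers, and
set `A = Σ_{r'} η_{r'} c_{r'}`, assumed nonzero.  For `x` with `1 − Ax > 0`,
the functions `G_r(x) = (1 − Ax)^{c_r/A}` satisfy
`G_r(0) = 1`,  `G_r′(x)·(1 − Ax) = −c_r·G_r(x)`  (that is,
`G_r′(x) = −c_r·G_r(x)/(1 − Ax)`),  and
`Π_{r'=1}^R G_{r'}(x)^{η_{r'}} = 1 − Ax`. -/
theorem leading_log_closed_form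
    (R : ℕ) (hR : 1 ≤ R)
    (η : Fin R → ℤ) (hη : ∀ r, η r ≠ 0)
    (c : Fin R → ℝ) (hc : ∀ r, c r ≠ 0)
    (A : ℝ) (hA : A = ∑ r' : Fin R, (η r' : ℝ) * c r') (hA0 : A ≠ 0) :
    (∀ r : Fin R, (1 - A * 0) ^ (c r / A) = (1 : ℝ)) ∧
    (∀ (r : Fin R) (x : ℝ), 1 - A * x > 0 →
      HasDerivAt (fun t : ℝ => (1 - A * t) ^ (c r / A))
        (-(c r) * (1 - A * x) ^ (c r / A) / (1 - A * x)) x) ∧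
    (∀ x : ℝ, 1 - A * x > 0 →
      ∏ r' : Fin R, ((1 - A * x) ^ (c r' / A)) ^ (η r') = 1 - A * x) := by
  refine ⟨fun r => by simp, ?_, ?_⟩
  · intro r x hx
    have hf : HasDerivAt (fun t : ℝ => 1 - A * t) (-A) x := by
      simpa using ((hasDerivAt_id x).const_mul A).const_sub 1
    have hne : (1 - A * x) ≠ 0 := ne_of_gt hx
    have h := hf.rpow_const (p := c r / A) (Or.inl hne)
    convert h using 1
    rw [Real.rpow_sub_one hne]
    field_simp
  · intro x hx
    have hne : (1 - A * x) ≠ 0 := ne_of_gt hx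
    have key : ∀ r' : Fin R, ((1 - A * x) ^ (c r' / A)) ^ (η r')
        = (1 - A * x) ^ (c r' / A * (η r' : ℝ)) := by
      intro r'
      rw [← Real.rpow_intCast ((1 - A * x) ^ (c r' / A)) (η r'),
        ← Real.rpow_mul (le_of_lt hx)]
    rw [Finset.prod_congr rfl (fun r' _ => key r'),
      ← Real.rpow_sum_of_pos hx]
    have : ∑ r' : Fin R, c r' / A * (η r' : ℝ)
        = (∑ r' : Fin R, (η r' : ℝ) * c r') / A := by
      rw [Finset.sum_div]; exact Finset.sum_congr rfl fun r' _ => by ring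
    rw [this, ← hA, div_self hA0, Real.rpow_one]
end
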